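/- Let X = ℝ₊ be the positive reals and let Rˣ : X³ → X³ be the map Rˣ(x₁,x₂,x₃) = ( (x₂ + x₁·x₃)/x₃, x₁·x₃, x₂·x₃/(x₂ + x₁·x₃) ). Then Rˣ satisfies the functional tetrahedron equation and is reversible, i.e. τ₁₃ ∘ Rˣ ∘ τ₁₃ ∘ Rˣ = Id, where τ₁₃(x,y,z) = (z,y,x). -/

import Mathlib

/-- Apply `R` to components 1, 2, 3 of a 6-tuple. -/
def map123 {X : Type*} (R : X × X × X → X × X × X) :
    X × X × X × X × X × X → X × X × X × X × X × X :=
  fun (x1, x2, x3, x4, x5, x6) =>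
    ((R (x1, x2, x3)).1, (R (x1, x2, x3)).2.1, (R (x1, x2, x3)).2.2, x4, x5, x6)

/-- Apply `R` to components 1, 4, 5 of a 6-tuple. -/
def map145 {X : Type*} (R : X × X × X → X × X × X) :
    X × X × X × X × X × X → X × X × X × X × X × X :=
  fun (x1, x2, x3, x4, x5, x6) =>
    ((R (x1, x4, x5)).1, x2, x3, (R (x1, x4, x5)).2.1, (R (x1, x4, x5)).2.2, x6)

/-- Apply `R` to components 2, 4, 6 of a 6-tuple. -/
def map246 {X : Type*} (R : X × X × X → X × X × X) :
    X × X × X × X × X × X → X × X × X × X × X × X :=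
  fun (x1, x2, x3, x4, x5, x6) =>
    (x1, (R (x2, x4, x6)).1, x3, (R (x2, x4, x6)).2.1, x5, (R (x2, x4, x6)).2.2)

/-- Apply `R` to components 3, 5, 6 of a 6-tuple. -/
def map356 {X : Type*} (R : X × X × X → X × X × X) :
    X × X × X × X × X × X → X × X × X × X × X × X :=
  fun (x1, x2, x3, x4, x5, x6) =>
    (x1, x2, (R (x3, x5, x6)).1, x4, (R (x3, x5, x6)).2.1, (R (x3, x5, x6)).2.2)

/-- The functional tetrahedron equation. -/
def IsTetrahedron {X : Type*} (R : X × X × X → X × X × X) : Prop :=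
  map123 R ∘ map145 R ∘ map246 R ∘ map356 R =
    map356 R ∘ map246 R ∘ map145 R ∘ map123 R

/-- The positive real numbers. -/
abbrev PReal : Type := {x : ℝ // 0 < x}

/-- The permutation of the first and third components of a triple. -/
def tau13 {X : Type*} : X × X × X → X × X × X := fun (x, y, z) => (z, y, x)

/-- The `x`-component of the AKP map, on positive reals. -/
noncomputable def RxAKP : PReal × PReal × PReal → PReal × PReal × PReal :=
  fun (⟨x1, hx1⟩, ⟨x2, hx2⟩, ⟨x3, hx3⟩) =>
    (⟨(x2 + x1 * x3) / x3, by positivity⟩,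
     ⟨x1 * x3, by positivity⟩,
     ⟨x2 * x3 / (x2 + x1 * x3), by positivity⟩)

/-!
Every coordinate of both sides is a subtraction-free rational function of the positive inputs,
so all denominators are positive; clearing them turns each coordinate identity into a
polynomial identity.
-/

@[simp] lemma RxAKP_fst_coe (x : PReal × PReal × PReal) :
    ((RxAKP x).1 : ℝ) = (x.2.1 + x.1 * x.2.2) / x.2.2 := rfl

@[simp] lemma RxAKP_snd_fst_coe (x : PReal × PReal × PReal) :
    ((RxAKP x).2.1 : ℝ) = x.1 * x.2.2 := rfl

@[simp] lemma RxAKP_snd_snd_coe (x : PReal × PReal × PReal) :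
    ((RxAKP x).2.2 : ℝ) = x.2.1 * x.2.2 / (x.2.1 + x.1 * x.2.2) := rfl

theorem RxAKP_reversible : tau13 ∘ RxAKP ∘ tau13 ∘ RxAKP = id := by
  funext ⟨⟨a, ha⟩, ⟨b, hb⟩, ⟨c, hc⟩⟩
  ext <;>
    simp only [Function.comp_apply, tau13, RxAKP_fst_coe, RxAKP_snd_fst_coe, RxAKP_snd_snd_coe,
      id_eq] <;>
    field_simp <;> ring

theorem RxAKP_isTetrahedron : IsTetrahedron RxAKP := by
  funext ⟨⟨a, ha⟩, ⟨b, hb⟩, ⟨c, hc⟩, ⟨d, hd⟩, ⟨e, he⟩, ⟨f, hf⟩⟩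
  ext <;>
    simp only [Function.comp_apply, map123, map145, map246, map356, Prod.mk.eta, RxAKP_fst_coe,
      RxAKP_snd_fst_coe, RxAKP_snd_snd_coe] <;>
    field_simp <;> ring

/-- the map `RxAKP` satisfies the functional tetrahedron equation and is
reversible. -/
theorem RxAKP_tetrahedron_reversible :
    IsTetrahedron RxAKP ∧ (tau13 ∘ RxAKP ∘ tau13 ∘ RxAKP = id) :=
  ⟨RxAKP_isTetrahedron, RxAKP_reversible⟩
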